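/- arXiv:2404.03780 — 4 statements merged into one kernel-verified Lean document; each statement's English description precedes it below -/
import Mathlib

section
/- Let f be a C¹ circle diffeomorphism with no periodic points, s < 0, and μ an s-measure for f. Suppose there exists C > 0 and a strictly increasing sequence of integers (q_n) such that (f^{q_n})'(x) ≤ C for all x and all n. Then μ is atomless. -/
/-!
Testing the s-measure identity against the indicator of `{p}` gives
`μ {p} = ((f^k)'(p))^(-s) μ {f^k p}`, hence `μ {p} ≤ C^(-s) μ {f^(q n) p}` for every `n`.
Without periodic points the atoms `{f^(q n) p}` are pairwise disjoint, so their masses are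
summable and tend to `0`.
-/

open MeasureTheory Filter Topology

theorem Function.Injective.injective_iterate_apply {α : Type*} {f : α → α}
    (hf : f.Injective) {x : α} (hx : x ∉ Function.periodicPts f) :
    (fun n ↦ f^[n] x).Injective := by
  refine Function.Injective.of_lt_imp_ne fun m n hmn heq ↦ hx ⟨n - m, by omega, ?_⟩
  apply hf.iterate m
  rw [← Function.iterate_add_apply, Nat.add_sub_cancel' hmn.le]
  exact heq.symm

namespace MeasureTheory

variable {α : Type*} [MeasurableSpace α] [MeasurableSingletonClass α] {μ : Measure α}

theorem tendsto_measureReal_singleton_of_injective [IsFiniteMeasure μ] {x : ℕ → α}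
    (hx : x.Injective) :
    Tendsto (fun n ↦ μ.real {x n}) atTop (𝓝 0) := by
  have hdisj : Pairwise (Function.onFun Disjoint fun n ↦ ({x n} : Set α)) :=
    fun m n hmn ↦ Set.disjoint_singleton.mpr (hx.ne hmn)
  have hsum : ∑' n, μ {x n} ≠ ⊤ := by
    rw [← measure_iUnion hdisj fun _ ↦ measurableSet_singleton _]
    exact measure_ne_top μ _
  exact (ENNReal.summable_toReal hsum).tendsto_atTop_zero

theorem measureReal_singleton_eq_mul_of_integral_indicator_eq {T : α → α} (hT : T.Injective)
    (w : α → ℝ) {p y : α} (hy : T y = p)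
    (h : ∫ x, ({p} : Set α).indicator 1 x ∂μ =
      ∫ x, w x * ({p} : Set α).indicator 1 (T x) ∂μ) :
    μ.real {p} = w y * μ.real {y} := by
  have hcomp : (fun x ↦ w x * ({p} : Set α).indicator 1 (T x)) =
      ({y} : Set α).indicator fun _ ↦ w y := by
    ext x
    by_cases hxy : x = y
    · simp [hxy, hy]
    · simp [hxy, ← hy, hT.ne hxy]
  rw [hcomp, integral_indicator_const _ (measurableSet_singleton _),
    integral_indicator_one (measurableSet_singleton _)] at h
  rw [h, smul_eq_mul, mul_comm]

end MeasureTheory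

theorem statement3_general (f : Homeomorph (AddCircle (1:ℝ)) (AddCircle (1:ℝ)))
    (f' : AddCircle (1:ℝ) → ℝ) (hf'pos : ∀ x, 0 < f' x)
    (hnoper : ∀ (x : AddCircle (1:ℝ)) (n : ℕ), 0 < n → (⇑f)^[n] x ≠ x)
    (s : ℝ) (hs : s < 0) (μ : Measure (AddCircle (1:ℝ))) [IsProbabilityMeasure μ]
    (h : ∀ (k : ℕ) (φ : AddCircle (1:ℝ) → ℝ), Measurable φ → (∃ M, ∀ x, |φ x| ≤ M) →
      ∫ x, φ x ∂μ =
        ∫ x, (∏ i ∈ Finset.range k, f' ((⇑f)^[i] ((⇑f.symm)^[k] x))) ^ (-s) *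
          φ ((⇑f.symm)^[k] x) ∂μ)
    (C : ℝ) (q : ℕ → ℕ) (hq : StrictMono q)
    (hbound : ∀ (x : AddCircle (1:ℝ)) (n : ℕ),
      ∏ i ∈ Finset.range (q n), f' ((⇑f)^[i] x) ≤ C) :
    ∀ p : AddCircle (1:ℝ), μ {p} = 0 := by
  intro p
  have hindicator_bdd :
      ∃ M, ∀ x, |({p} : Set (AddCircle (1:ℝ))).indicator (1 : AddCircle (1:ℝ) → ℝ) x| ≤ M :=
    ⟨1, fun x ↦ by by_cases hx : x = p <;> simp [hx]⟩
  have hatom (k : ℕ) :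
      μ.real {p} = (∏ i ∈ Finset.range k, f' ((⇑f)^[i] p)) ^ (-s) * μ.real {(⇑f)^[k] p} := by
    have hinv := Function.LeftInverse.iterate f.symm_apply_apply k p
    simpa only [hinv] using measureReal_singleton_eq_mul_of_integral_indicator_eq
      (f.symm.injective.iterate k) _ hinv
      (h k _ (measurable_one.indicator (measurableSet_singleton p)) hindicator_bdd)
  have hle (n : ℕ) : μ.real {p} ≤ C ^ (-s) * μ.real {(⇑f)^[q n] p} := by
    rw [hatom (q n)]
    gcongr
    · exact Finset.prod_nonneg fun i _ ↦ (hf'pos _).le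
    · linarith
    · exact hbound p n
  have horbit : (fun n ↦ (⇑f)^[q n] p).Injective :=
    (f.injective.injective_iterate_apply fun ⟨n, hn, hper⟩ ↦ hnoper p n hn hper).comp
      hq.injective
  have htend : Tendsto (fun n ↦ C ^ (-s) * μ.real {(⇑f)^[q n] p}) atTop (𝓝 0) := by
    simpa using (tendsto_measureReal_singleton_of_injective horbit).const_mul (C ^ (-s))
  exact (measureReal_eq_zero_iff).mp (le_antisymm (ge_of_tendsto' htend hle) measureReal_nonneg)

/-- an s-measure (s < 0) of a circle diffeomorphism without periodic points,
whose iterates `f^{q_n}` have uniformly bounded derivative along a strictly increasing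
sequence of times, is atomless. -/
theorem statement3 (f : Homeomorph (AddCircle (1:ℝ)) (AddCircle (1:ℝ)))
    (f' : AddCircle (1:ℝ) → ℝ) (hf'pos : ∀ x, 0 < f' x)
    (hnoper : ∀ (x : AddCircle (1:ℝ)) (n : ℕ), 0 < n → (⇑f)^[n] x ≠ x)
    (s : ℝ) (hs : s < 0) (μ : Measure (AddCircle (1:ℝ))) [IsProbabilityMeasure μ]
    (h : ∀ (k : ℕ) (φ : AddCircle (1:ℝ) → ℝ), Measurable φ → (∃ M, ∀ x, |φ x| ≤ M) →
      ∫ x, φ x ∂μ =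
        ∫ x, (∏ i ∈ Finset.range k, f' ((⇑f)^[i] ((⇑f.symm)^[k] x))) ^ (-s) *
          φ ((⇑f.symm)^[k] x) ∂μ)
    (C : ℝ) (hC : 0 < C) (q : ℕ → ℕ) (hq : StrictMono q)
    (hbound : ∀ (x : AddCircle (1:ℝ)) (n : ℕ),
      ∏ i ∈ Finset.range (q n), f' ((⇑f)^[i] x) ≤ C) :
    ∀ p : AddCircle (1:ℝ), μ {p} = 0 :=
  statement3_general f f' hf'pos hnoper s hs μ h C q hq hbound
end

section
/- Let c ∈ ℝ, d ≥ 2 an integer, and f(x) = f(c) + ψ(x)·|ψ(x)|^{d-1} on a neighborhood U of c, where ψ is a C¹ diffeomorphism with ψ(c) = 0. Then there exists a constant K > 0 and a neighborhood U' ⊆ U of c such that for every interval I ⊆ U' and every x ∈ I, f'(x) ≤ K · |f(I)| / |I|, where |·| denotes length. -/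
/-!
Write `g t = t * |t| ^ e`, so that `f = f c + g ∘ ψ` near `c`. Near `c`, `|ψ'|` lies between
`|ψ' c| / 2` and `2 |ψ' c|`. Hence on `[a, b]` the map `ψ` is monotone and, by the mean value
theorem, `|ψ b - ψ a| ≥ |ψ' c| (b - a) / 2`. The derivative `(e + 1) |ψ x| ^ e ψ' x` is at most
`2 (e + 1) |ψ' c| max (|ψ a|, |ψ b|) ^ e`, and the elementary inequality
`2 |g v - g u| ≥ |v - u| max (|u|, |v|) ^ e` bounds `|f b - f a|` from below by a comparable
multiple of `b - a`.
-/

open Set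

/-- `signedPow e t = sign t * |t| ^ (e + 1)`, the model of a critical point of order `e + 1`. -/
def signedPow (e : ℕ) (t : ℝ) : ℝ := t * |t| ^ e

theorem hasDerivAt_signedPow (e : ℕ) (y : ℝ) :
    HasDerivAt (signedPow e) ((e + 1) * |y| ^ e) y := by
  refine hasDerivAt_of_hasDerivAt_of_ne' (f := signedPow e) (g := fun y => (e + 1) * |y| ^ e)
    (x := 0) (fun y hy => ?_) (by unfold signedPow; fun_prop) (by fun_prop) y
  rcases hy.lt_or_gt with hy | hy
  · have h := ((hasDerivAt_pow (e + 1) (-y)).comp y (hasDerivAt_neg y)).neg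
    refine (h.congr_of_eventuallyEq ?_).congr_deriv ?_
    · filter_upwards [eventually_lt_nhds hy] with z hz
      simp [signedPow, abs_of_neg hz, pow_succ, mul_comm]
    · simp [abs_of_neg hy]
  · refine ((hasDerivAt_pow (e + 1) y).congr_of_eventuallyEq ?_).congr_deriv ?_
    · filter_upwards [eventually_gt_nhds hy] with z hz
      simp [signedPow, abs_of_pos hz, pow_succ']
    · simp [abs_of_pos hy]

theorem sub_mul_max_abs_pow_le_signedPow_sub (e : ℕ) {u v : ℝ} (huv : u ≤ v) :
    (v - u) * max |u| |v| ^ e ≤ 2 * (signedPow e v - signedPow e u) := by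
  have hsame : ∀ p q : ℝ, 0 ≤ p → p ≤ q → (q - p) * q ^ e ≤ q * q ^ e - p * p ^ e := by
    intro p q hp hpq
    nlinarith [mul_nonneg hp (sub_nonneg.2 (pow_le_pow_left₀ hp hpq e))]
  unfold signedPow
  rcases le_or_gt 0 u with hu | hu
  · have hv : 0 ≤ v := hu.trans huv
    rw [abs_of_nonneg hu, abs_of_nonneg hv, max_eq_right huv]
    nlinarith [hsame u v hu huv, mul_nonneg (sub_nonneg.2 huv) (pow_nonneg hv e)]
  rcases le_or_gt v 0 with hv | hv
  · rw [abs_of_neg hu, abs_of_nonpos hv, max_eq_left (by linarith : -v ≤ -u)]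
    nlinarith [hsame (-v) (-u) (by linarith) (by linarith),
      mul_nonneg (sub_nonneg.2 huv) (pow_nonneg (by linarith : (0:ℝ) ≤ -u) e)]
  -- Opposite signs: `signedPow e v - signedPow e u ≥ max |u| |v| ^ (e + 1)`
  -- while `v - u ≤ 2 * max |u| |v|`.
  · rw [abs_of_neg hu, abs_of_pos hv]
    have hu' : (0:ℝ) < -u := by linarith
    rcases max_cases (-u) v with ⟨hmax, hle⟩ | ⟨hmax, hle⟩ <;> rw [hmax] <;>
      nlinarith [pow_nonneg hu'.le e, pow_nonneg hv.le e,
        mul_nonneg hv.le (pow_nonneg hv.le e), mul_nonneg hu'.le (pow_nonneg hu'.le e)]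

theorem abs_sub_mul_max_abs_pow_le_abs_signedPow_sub (e : ℕ) (u v : ℝ) :
    |v - u| * max |u| |v| ^ e ≤ 2 * |signedPow e v - signedPow e u| := by
  rcases le_total u v with huv | hvu
  · rw [abs_of_nonneg (sub_nonneg.2 huv)]
    exact (sub_mul_max_abs_pow_le_signedPow_sub e huv).trans (by gcongr; exact le_abs_self _)
  · rw [abs_sub_comm, abs_of_nonneg (sub_nonneg.2 hvu), max_comm, abs_sub_comm]
    exact (sub_mul_max_abs_pow_le_signedPow_sub e hvu).trans (by gcongr; exact le_abs_self _)

theorem mapsTo_uIcc_of_hasDerivAt_ne_zero {ψ ψ' : ℝ → ℝ} {a b : ℝ}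
    (hψ : ∀ x ∈ uIcc a b, HasDerivAt ψ (ψ' x) x) (hψ' : ∀ x ∈ uIcc a b, ψ' x ≠ 0) :
    MapsTo ψ (uIcc a b) (uIcc (ψ a) (ψ b)) := by
  have hcont : ContinuousOn ψ (uIcc a b) := fun x hx => (hψ x hx).continuousAt.continuousWithinAt
  have hderiv : ∀ x ∈ interior (uIcc a b), HasDerivWithinAt ψ (ψ' x) (interior (uIcc a b)) x :=
    fun x hx => (hψ x (interior_subset hx)).hasDerivWithinAt
  rcases hasDerivWithinAt_forall_lt_or_forall_gt_of_forall_ne (convex_uIcc a b)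
    (fun x hx => (hψ x hx).hasDerivWithinAt) hψ' with hneg | hpos
  · exact (strictAntiOn_of_hasDerivWithinAt_neg (convex_uIcc a b) hcont hderiv
      fun x hx => hneg x (interior_subset hx)).antitoneOn.mapsTo_uIcc
  · exact (strictMonoOn_of_hasDerivWithinAt_pos (convex_uIcc a b) hcont hderiv
      fun x hx => hpos x (interior_subset hx)).monotoneOn.mapsTo_uIcc

theorem mul_abs_pow_mul_abs_deriv_le {e : ℕ} {ψ ψ' : ℝ → ℝ} {a b m M x : ℝ} (hab : a < b)
    (hψ : ∀ y ∈ Icc a b, HasDerivAt ψ (ψ' y) y) (hm : 0 < m)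
    (hm_le : ∀ y ∈ Icc a b, m ≤ |ψ' y|) (hle_M : ∀ y ∈ Icc a b, |ψ' y| ≤ M)
    (hx : x ∈ Icc a b) :
    (e + 1) * |ψ x| ^ e * |ψ' x| ≤
      2 * (e + 1) * (M / m) * |signedPow e (ψ b) - signedPow e (ψ a)| / (b - a) := by
  have hba : 0 < b - a := sub_pos.2 hab
  obtain ⟨ξ, hξ, hslope⟩ := exists_hasDerivAt_eq_slope ψ ψ' hab
    (fun y hy => (hψ y hy).continuousAt.continuousWithinAt)
    (fun y hy => hψ y (Ioo_subset_Icc_self hy))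
  have hψ_sub : m * (b - a) ≤ |ψ b - ψ a| := by
    have := hm_le ξ (Ioo_subset_Icc_self hξ)
    rwa [hslope, abs_div, abs_of_pos hba, le_div_iff₀ hba] at this
  have hψx : |ψ x| ≤ max |ψ a| |ψ b| := by
    rw [← uIcc_of_le hab.le] at hψ hm_le hx
    rcases mem_uIcc.1 (mapsTo_uIcc_of_hasDerivAt_ne_zero hψ
      (fun y hy => abs_pos.1 (hm.trans_le (hm_le y hy))) hx) with ⟨h₁, h₂⟩ | ⟨h₁, h₂⟩
    · exact abs_le_max_abs_abs h₁ h₂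
    · exact max_comm |ψ b| |ψ a| ▸ abs_le_max_abs_abs h₁ h₂
  have hM : 0 ≤ M := (abs_nonneg _).trans (hle_M x hx)
  calc (e + 1) * |ψ x| ^ e * |ψ' x|
      ≤ (e + 1) * max |ψ a| |ψ b| ^ e * M := by gcongr; exact hle_M x hx
    _ = 2 * (e + 1) * (M / m) * (m * (b - a) * max |ψ a| |ψ b| ^ e / 2) / (b - a) := by
      field_simp
    _ ≤ 2 * (e + 1) * (M / m) * |signedPow e (ψ b) - signedPow e (ψ a)| / (b - a) := by
      gcongr
      calc m * (b - a) * max |ψ a| |ψ b| ^ e / 2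
          ≤ |ψ b - ψ a| * max |ψ a| |ψ b| ^ e / 2 := by gcongr
        _ ≤ |signedPow e (ψ b) - signedPow e (ψ a)| := by
          linarith [abs_sub_mul_max_abs_pow_le_abs_signedPow_sub e (ψ a) (ψ b)]

theorem statement5_general (c : ℝ) (d : ℕ) (U : Set ℝ) (hU : U ∈ nhds c)
    (f ψ ψ' : ℝ → ℝ)
    (hψ : ∀ x ∈ U, HasDerivAt ψ (ψ' x) x)
    (hψ'cont : ContinuousOn ψ' U) (hψ'ne : ∀ x ∈ U, ψ' x ≠ 0)
    (hf : ∀ x ∈ U, f x = f c + ψ x * |ψ x| ^ (d - 1)) :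
    ∃ K > (0:ℝ), ∃ U' ∈ nhds c, U' ⊆ U ∧
      ∀ a b : ℝ, a < b → Set.Icc a b ⊆ U' →
        ∀ x ∈ Set.Icc a b, |deriv f x| ≤ K * |f b - f a| / (b - a) := by
  set e := d - 1
  set r := |ψ' c|
  have hr : 0 < r := abs_pos.2 (hψ'ne c (mem_of_mem_nhds hU))
  have hψ'c : Filter.Tendsto (fun x => |ψ' x|) (nhds c) (nhds r) :=
    (hψ'cont.continuousAt hU).abs
  have hr2 : r < 2 * r := by linarith
  obtain ⟨U', hU', hU'_open, hcU'⟩ := eventually_nhds_iff.1 <|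
    (Filter.eventually_mem_set.2 hU).and
      ((hψ'c.eventually_const_lt (half_lt_self hr)).and (hψ'c.eventually_lt_const hr2))
  refine ⟨8 * (e + 1), by positivity, U', hU'_open.mem_nhds hcU', fun x hx => (hU' x hx).1, ?_⟩
  intro a b hab hsub x hx
  have hfx : HasDerivAt f ((e + 1) * |ψ x| ^ e * ψ' x) x := by
    refine (((hasDerivAt_signedPow e (ψ x)).comp x (hψ x (hU' x (hsub hx)).1)).const_add (f c))
      |>.congr_of_eventuallyEq ?_
    filter_upwards [hU'_open.mem_nhds (hsub hx)] with y hy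
    exact hf y (hU' y hy).1
  have hfab : f b - f a = signedPow e (ψ b) - signedPow e (ψ a) := by
    rw [hf b (hU' b (hsub (right_mem_Icc.2 hab.le))).1,
      hf a (hU' a (hsub (left_mem_Icc.2 hab.le))).1]
    simp only [signedPow]; ring
  calc |deriv f x| = (e + 1) * |ψ x| ^ e * |ψ' x| := by
        rw [hfx.deriv, abs_mul, abs_of_nonneg (by positivity : (0:ℝ) ≤ (e + 1) * |ψ x| ^ e)]
    _ ≤ 2 * (e + 1) * (2 * r / (r / 2)) * |f b - f a| / (b - a) := hfab ▸
        mul_abs_pow_mul_abs_deriv_le hab (fun y hy => hψ y (hU' y (hsub hy)).1) (half_pos hr)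
          (fun y hy => (hU' y (hsub hy)).2.1.le) (fun y hy => (hU' y (hsub hy)).2.2.le) hx
    _ = 8 * (e + 1) * |f b - f a| / (b - a) := by field_simp; ring

/-- local derivative estimate at a non-flat critical point:
if `f(x) = f(c) + ψ(x)·|ψ(x)|^(d-1)` near `c` with `ψ` a C¹ diffeomorphism vanishing
at `c`, then there are `K > 0` and a smaller neighborhood `U'` of `c` on which
`|f'(x)| ≤ K · |f(I)| / |I|` for every interval `I ⊆ U'` and `x ∈ I`. -/
theorem statement5 (c : ℝ) (d : ℕ) (hd : 2 ≤ d) (U : Set ℝ) (hU : U ∈ nhds c)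
    (f ψ ψ' : ℝ → ℝ) (hψc : ψ c = 0)
    (hψ : ∀ x ∈ U, HasDerivAt ψ (ψ' x) x)
    (hψ'cont : ContinuousOn ψ' U) (hψ'ne : ∀ x ∈ U, ψ' x ≠ 0)
    (hf : ∀ x ∈ U, f x = f c + ψ x * |ψ x| ^ (d - 1)) :
    ∃ K > (0:ℝ), ∃ U' ∈ nhds c, U' ⊆ U ∧
      ∀ a b : ℝ, a < b → Set.Icc a b ⊆ U' →
        ∀ x ∈ Set.Icc a b, |deriv f x| ≤ K * |f b - f a| / (b - a) :=
  statement5_general c d U hU f ψ ψ' hψ hψ'cont hψ'ne hf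
end

section
/- Fix a circle homeomorphism f and s < 0. If every s-measure for f is ergodic with respect to f, and at least one s-measure exists, then the s-measure is unique. -/
/-!
If `μ` and `ν` are s-measures, so is `ρ = (μ + ν) / 2`, which is therefore ergodic. Testing the
transfer identity of `μ + ν` against `φ · (g ∘ f)`, where `g = dμ / d(μ + ν) ≤ 1`, and comparing
with the transfer identity of `μ` shows `g ∘ f = g` almost everywhere. The transfer identity also
makes `μ + ν` quasi-invariant under `f`, so ergodicity forces `g` to be almost everywhere constant.
Hence `μ` and likewise `ν` are multiples of `μ + ν`, and being probability measures they coincide.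
-/

open MeasureTheory Filter
open scoped ENNReal NNReal

theorem exists_abs_indicator_one_le {X : Type*} (s : Set X) :
    ∃ M, ∀ x, |s.indicator (1 : X → ℝ) x| ≤ M :=
  ⟨1, fun x => by by_cases hx : x ∈ s <;> simp [hx]⟩

section

variable {X : Type*} [MeasurableSpace X]

theorem PreErgodic.of_prob_eq_zero_or_one {f : X → X} {μ : Measure X} [IsProbabilityMeasure μ]
    (h : ∀ s, MeasurableSet s → f ⁻¹' s = s → μ s = 0 ∨ μ s = 1) : PreErgodic f μ where
  aeconst_set s hs hfs := by
    rw [eventuallyConst_set', ae_eq_empty, ae_eq_univ, prob_compl_eq_zero_iff hs]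
    exact h s hs hfs

end

namespace MeasureTheory

variable {X : Type*} [MeasurableSpace X]

theorem Measure.exists_withDensity_eq_of_le {μ σ : Measure X} [IsFiniteMeasure σ] (h : μ ≤ σ) :
    ∃ g : X → ℝ≥0, Measurable g ∧ (∀ x, g x ≤ 1) ∧ μ = σ.withDensity fun x => g x := by
  have := isFiniteMeasure_of_le σ h
  refine ⟨fun x => (min (μ.rnDeriv σ x) 1).toNNReal,
    ((μ.measurable_rnDeriv σ).min measurable_const).ennreal_toNNReal,
    fun x => by simpa using ENNReal.toNNReal_mono ENNReal.one_ne_top (min_le_right _ _), ?_⟩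
  conv_lhs => rw [← Measure.withDensity_rnDeriv_eq μ σ (Measure.absolutelyContinuous_of_le h)]
  refine withDensity_congr_ae ?_
  filter_upwards [Measure.rnDeriv_le_one_of_le h] with x hx
  rw [ENNReal.coe_toNNReal (min_le_right _ _ |>.trans_lt ENNReal.one_lt_top).ne]
  exact (min_eq_left hx).symm

theorem Measure.eq_of_eq_smul_of_eq_smul {μ ν σ : Measure X} [IsProbabilityMeasure μ]
    [IsProbabilityMeasure ν] [IsFiniteMeasure σ] {k k' : ℝ≥0∞} (hμ : μ = k • σ)
    (hν : ν = k' • σ) : μ = ν := by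
  have hσ : σ Set.univ ≠ 0 := fun h0 =>
    IsProbabilityMeasure.ne_zero μ (by simpa [Measure.measure_univ_eq_zero.mp h0] using hμ)
  have hkk' : k * σ Set.univ = k' * σ Set.univ := by
    have hμ1 := congrArg (· Set.univ) hμ
    have hν1 := congrArg (· Set.univ) hν
    simp only [measure_univ, Measure.smul_apply, smul_eq_mul] at hμ1 hν1
    rw [← hμ1, ← hν1]
  rw [hμ, hν, (ENNReal.mul_left_inj hσ (measure_ne_top σ _)).mp hkk']

/-- `μ` is fixed by the dual of the transfer operator `φ ↦ w · (φ ∘ f⁻¹)`. The s-measures are the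
probability measures with this property for `w = (f' ∘ f⁻¹) ^ (-s)`. -/
def IsTransferInvariant (f : X ≃ᵐ X) (w : X → ℝ) (μ : Measure X) : Prop :=
  ∀ φ : X → ℝ, Measurable φ → (∃ M, ∀ x, |φ x| ≤ M) →
    ∫ x, φ x ∂μ = ∫ x, w x * φ (f.symm x) ∂μ

theorem integrable_of_abs_le {μ : Measure X} [IsFiniteMeasure μ] {φ : X → ℝ}
    (hφ : Measurable φ) (hb : ∃ M, ∀ x, |φ x| ≤ M) : Integrable φ μ :=
  let ⟨M, hM⟩ := hb
  .of_bound hφ.aestronglyMeasurable M (ae_of_all _ hM)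

theorem integral_indicator_one_mul {μ : Measure X} {s : Set X} (hs : MeasurableSet s)
    (F : X → ℝ) : ∫ x, s.indicator 1 x * F x ∂μ = ∫ x in s, F x ∂μ := by
  rw [← integral_indicator hs]
  congr 1 with x
  by_cases hx : x ∈ s <;> simp [hx]

namespace IsTransferInvariant

variable {f : X ≃ᵐ X} {w : X → ℝ} {μ ν σ : Measure X}

theorem integrable_weight [IsFiniteMeasure μ] [NeZero μ] (hμ : IsTransferInvariant f w μ) :
    Integrable w μ := by
  by_contra hw
  have h := hμ 1 measurable_const ⟨1, fun _ => by simp⟩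
  simp only [Pi.one_apply, mul_one, integral_undef hw, integral_const, smul_eq_mul] at h
  simp [measureReal_eq_zero_iff, NeZero.ne μ] at h

theorem add [IsFiniteMeasure μ] [IsFiniteMeasure ν] (hμ : IsTransferInvariant f w μ)
    (hν : IsTransferInvariant f w ν) (hwμ : Integrable w μ) (hwν : Integrable w ν) :
    IsTransferInvariant f w (μ + ν) := by
  intro φ hφ hb
  have hwφ {m : Measure X} (hw : Integrable w m) : Integrable (fun x => w x * φ (f.symm x)) m :=
    let ⟨M, hM⟩ := hb
    hw.mul_bdd (hφ.comp f.symm.measurable).aestronglyMeasurable (ae_of_all _ fun x => hM _)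
  rw [integral_add_measure (integrable_of_abs_le hφ hb) (integrable_of_abs_le hφ hb),
    integral_add_measure (hwφ hwμ) (hwφ hwν), hμ φ hφ hb, hν φ hφ hb]

theorem smul (hμ : IsTransferInvariant f w μ) (c : ℝ≥0∞) : IsTransferInvariant f w (c • μ) := by
  intro φ hφ hb
  rw [integral_smul_measure, integral_smul_measure, hμ φ hφ hb]

theorem quasiMeasurePreserving [IsFiniteMeasure μ] (hμ : IsTransferInvariant f w μ) :
    Measure.QuasiMeasurePreserving f μ μ := by
  refine ⟨f.measurable, .mk fun s hs hμs => ?_⟩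
  have h := hμ ((f ⁻¹' s).indicator 1) (measurable_one.indicator (hs.preimage f.measurable))
    (exists_abs_indicator_one_le (f ⁻¹' s))
  have hnull : (fun x => w x * (f ⁻¹' s).indicator 1 (f.symm x)) =ᵐ[μ] 0 := by
    filter_upwards [measure_eq_zero_iff_ae_notMem.mp hμs] with x hx
    simp [Set.indicator_of_notMem (show f.symm x ∉ f ⁻¹' s by simpa using hx)]
  rw [integral_congr_ae hnull, integral_indicator_one (hs.preimage f.measurable)] at h
  rw [Measure.map_apply f.measurable hs]
  simpa [measureReal_eq_zero_iff] using h

theorem integral_mul_comp_eq_of_withDensity [IsFiniteMeasure μ] (hμ : IsTransferInvariant f w μ)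
    {g : X → ℝ≥0} (hg : Measurable g) (hgC : ∃ C, ∀ x, g x ≤ C)
    (hgμ : IsTransferInvariant f w (μ.withDensity fun x => g x)) {φ : X → ℝ}
    (hφ : Measurable φ) (hb : ∃ M, ∀ x, |φ x| ≤ M) :
    ∫ x, φ x * g (f x) ∂μ = ∫ x, φ x * g x ∂μ := by
  obtain ⟨C, hC⟩ := hgC
  obtain ⟨M, hM⟩ := hb
  have hφg : ∃ M', ∀ x, |φ x * g (f x)| ≤ M' := ⟨M * C, fun x => by
    rw [abs_mul, NNReal.abs_eq]
    exact mul_le_mul (hM x) (by exact_mod_cast hC _) (g _).2 ((abs_nonneg _).trans (hM x))⟩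
  calc ∫ x, φ x * g (f x) ∂μ
      = ∫ x, w x * (φ (f.symm x) * g (f (f.symm x))) ∂μ :=
        hμ _ (hφ.mul (hg.comp f.measurable).coe_nnreal_real) hφg
    _ = ∫ x, g x • (w x * φ (f.symm x)) ∂μ := by
        simp only [MeasurableEquiv.apply_symm_apply, NNReal.smul_def, smul_eq_mul]
        congr 1 with x
        ring
    _ = ∫ x, φ x ∂(μ.withDensity fun x => g x) :=
        ((integral_withDensity_eq_integral_smul hg _).symm.trans (hgμ φ hφ ⟨M, hM⟩).symm)
    _ = ∫ x, φ x * g x ∂μ := by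
        rw [integral_withDensity_eq_integral_smul hg]
        simp only [NNReal.smul_def, smul_eq_mul, mul_comm]

theorem comp_ae_eq_of_withDensity [IsFiniteMeasure μ] (hμ : IsTransferInvariant f w μ)
    {g : X → ℝ≥0} (hg : Measurable g) (hgC : ∃ C, ∀ x, g x ≤ C)
    (hgμ : IsTransferInvariant f w (μ.withDensity fun x => g x)) :
    g ∘ f =ᵐ[μ] g := by
  obtain ⟨C, hC⟩ := hgC
  have hbound (x : X) : ‖(g x : ℝ)‖ ≤ C := by simpa using hC x
  have hreal : (fun x => (g (f x) : ℝ)) =ᵐ[μ] fun x => (g x : ℝ) := by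
    refine Integrable.ae_eq_of_forall_setIntegral_eq _ _
      (.of_bound (hg.comp f.measurable).coe_nnreal_real.aestronglyMeasurable C
        (ae_of_all _ fun x => hbound (f x)))
      (.of_bound hg.coe_nnreal_real.aestronglyMeasurable C (ae_of_all _ hbound))
      fun s hs _ => ?_
    rw [← integral_indicator_one_mul hs, ← integral_indicator_one_mul hs,
      hμ.integral_mul_comp_eq_of_withDensity hg ⟨C, hC⟩ hgμ (measurable_one.indicator hs)
        (exists_abs_indicator_one_le s)]
  filter_upwards [hreal] with x hx using NNReal.coe_injective hx

theorem exists_eq_smul_of_le [IsFiniteMeasure σ] (hσ : IsTransferInvariant f w σ)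
    (herg : PreErgodic f σ) (hμ : IsTransferInvariant f w μ) (hle : μ ≤ σ) :
    ∃ k : ℝ≥0∞, μ = k • σ := by
  obtain ⟨g, hg, hg1, rfl⟩ := Measure.exists_withDensity_eq_of_le hle
  have hinv : g ∘ f =ᵐ[σ] g := hσ.comp_ae_eq_of_withDensity hg ⟨1, hg1⟩ hμ
  obtain ⟨k, hk⟩ := (QuasiErgodic.mk hσ.quasiMeasurePreserving herg).ae_eq_const_of_ae_eq_comp₀
    hg.nullMeasurable hinv
  refine ⟨k, ?_⟩
  rw [withDensity_congr_ae (g := fun _ => (k : ℝ≥0∞)) (hk.mono fun x hx => congrArg _ hx),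
    withDensity_const]

end IsTransferInvariant

end MeasureTheory

theorem statement8_general (f : Homeomorph (AddCircle (1:ℝ)) (AddCircle (1:ℝ)))
    (f' : AddCircle (1:ℝ) → ℝ) (s : ℝ)
    (IsS : Measure (AddCircle (1:ℝ)) → Prop)
    (hIsS : ∀ μ, IsS μ ↔ (IsProbabilityMeasure μ ∧
      ∀ φ : AddCircle (1:ℝ) → ℝ, Measurable φ → (∃ M, ∀ x, |φ x| ≤ M) →
        ∫ x, φ x ∂μ = ∫ x, (f' (f.symm x)) ^ (-s) * φ (f.symm x) ∂μ))
    (herg : ∀ μ, IsS μ → ∀ B : Set (AddCircle (1:ℝ)), MeasurableSet B →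
      ⇑f ⁻¹' B = B → μ B = 0 ∨ μ B = 1) :
    ∀ μ ν, IsS μ → IsS ν → μ = ν := by
  set w : AddCircle (1:ℝ) → ℝ := fun x => f' (f.symm x) ^ (-s)
  have hS (m) (hm : IsS m) : IsProbabilityMeasure m ∧ IsTransferInvariant f.toMeasurableEquiv w m :=
    (hIsS m).1 hm
  intro μ ν hμ hν
  obtain ⟨hμP, hμT⟩ := hS μ hμ
  obtain ⟨hνP, hνT⟩ := hS ν hν
  have hσT : IsTransferInvariant f.toMeasurableEquiv w (μ + ν) :=
    hμT.add hνT hμT.integrable_weight hνT.integrable_weight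
  have hρP : IsProbabilityMeasure ((2 : ℝ≥0∞)⁻¹ • (μ + ν)) :=
    ⟨by simp [ENNReal.inv_two_add_inv_two]⟩
  have hρ : IsS ((2 : ℝ≥0∞)⁻¹ • (μ + ν)) := (hIsS _).2 ⟨hρP, hσT.smul _⟩
  have hσerg : PreErgodic f (μ + ν) := by
    have := (PreErgodic.of_prob_eq_zero_or_one (herg _ hρ)).smul_measure (2 : ℝ≥0∞)
    rwa [smul_smul, ENNReal.mul_inv_cancel two_ne_zero ENNReal.ofNat_ne_top, one_smul] at this
  obtain ⟨k, hk⟩ := hσT.exists_eq_smul_of_le hσerg hμT (Measure.le_add_right le_rfl)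
  obtain ⟨k', hk'⟩ := hσT.exists_eq_smul_of_le hσerg hνT (Measure.le_add_left le_rfl)
  exact Measure.eq_of_eq_smul_of_eq_smul hk hk'

/-- if every s-measure (s < 0) of a circle homeomorphism is ergodic and
at least one s-measure exists, then the s-measure is unique. -/
theorem statement8 (f : Homeomorph (AddCircle (1:ℝ)) (AddCircle (1:ℝ)))
    (f' : AddCircle (1:ℝ) → ℝ) (s : ℝ) (hs : s < 0)
    (IsS : Measure (AddCircle (1:ℝ)) → Prop)
    (hIsS : ∀ μ, IsS μ ↔ (IsProbabilityMeasure μ ∧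
      ∀ φ : AddCircle (1:ℝ) → ℝ, Measurable φ → (∃ M, ∀ x, |φ x| ≤ M) →
        ∫ x, φ x ∂μ = ∫ x, (f' (f.symm x)) ^ (-s) * φ (f.symm x) ∂μ))
    (herg : ∀ μ, IsS μ → ∀ B : Set (AddCircle (1:ℝ)), MeasurableSet B →
      ⇑f ⁻¹' B = B → μ B = 0 ∨ μ B = 1)
    (hex : ∃ μ, IsS μ) :
    ∀ μ ν, IsS μ → IsS ν → μ = ν :=
  statement8_general f f' s IsS hIsS herg
end

section
/- Let V be a Banach space, S ⊆ V an open set whose closure S̄ is a star domain about 0 (i.e., 0 ∈ S̄ and [0,w] ⊆ S̄ for all w ∈ S̄). Let τ_n : S̄ → ℝ be continuous functions converging pointwise on S̄ to a continuous function τ. Assume each τ_n is Gateaux differentiable on a neighborhood of S̄ with bounded linear differentials d|_v τ_n, and assume there is a bounded linear functional L such that for every sequence v_n → 0 with v_n ∈ S̄, the functionals d|_{v_n} τ_n converge to L in operator norm. Then τ is Fréchet differentiable at 0 along S̄ with derivative L, i.e., |τ(v) − τ(0) − L(v)| = o(||v||) as v → 0 in S̄. -/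
/-!
On a small star-shaped neighbourhood of `0` in `closure S`, the sequential hypothesis on
the differentials upgrades to the uniform bound `‖D n v - L‖ ≤ ε` for all large `n`.
Integrating the Gateaux derivative of `τₙ` along the segment `[0, v]` then gives
`|τₙ v - τₙ 0 - L v| ≤ ε ‖v‖` for all large `n`, and the bound survives the pointwise limit.
-/

open Filter Topology Asymptotics Metric Set Function

theorem tendsto_uncurry_atTop_prod_nhdsWithin_of_seq {X Y : Type*} [TopologicalSpace X]
    [FirstCountableTopology X] [TopologicalSpace Y] {s : Set X} {x₀ : X} (hx₀ : x₀ ∈ s)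
    {f : ℕ → X → Y} {y : Y}
    (h : ∀ v : ℕ → X, (∀ n, v n ∈ s) → Tendsto v atTop (𝓝 x₀) →
      Tendsto (fun n => f n (v n)) atTop (𝓝 y)) :
    Tendsto (uncurry f) (atTop ×ˢ 𝓝[s] x₀) (𝓝 y) := by
  obtain ⟨B, hB⟩ := (𝓝 x₀).exists_antitone_basis
  intro U hU
  by_contra hnot
  have hfreq : ∀ k, ∃ᶠ n in atTop, ∃ v ∈ s ∩ B k, f n v ∉ U := by
    intro k
    by_contra hk
    simp only [not_frequently, not_exists, not_and, not_not] at hk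
    exact hnot (mem_prod_iff.2
      ⟨_, hk, s ∩ B k, inter_mem_nhdsWithin s (hB.mem k), fun p hp => hp.1 p.2 hp.2⟩)
  obtain ⟨φ, hφ, hbad⟩ := extraction_forall_of_frequently hfreq
  choose v hv hvU using hbad
  -- `w` runs through the bad points `v k` at the times `φ k` and rests at `x₀` in between.
  set w : ℕ → X := extend φ v fun _ => x₀
  have hw_φ : ∀ k, w (φ k) = v k := hφ.injective.extend_apply _ _
  have hw_off : ∀ n, (¬∃ k, φ k = n) → w n = x₀ := fun n hn => extend_apply' _ _ _ hn
  have hw_mem : ∀ n, w n ∈ s := by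
    intro n
    by_cases hn : ∃ k, φ k = n
    · obtain ⟨k, rfl⟩ := hn
      exact hw_φ k ▸ (hv k).1
    · exact hw_off n hn ▸ hx₀
  have hw_tendsto : Tendsto w atTop (𝓝 x₀) := by
    refine hB.tendsto_right_iff.2 fun k _ => ?_
    filter_upwards [eventually_ge_atTop (φ k)] with n hn
    by_cases hn' : ∃ j, φ j = n
    · obtain ⟨j, rfl⟩ := hn'
      exact hw_φ j ▸ hB.antitone (hφ.le_iff_le.1 hn) (hv j).2
    · exact hw_off n hn' ▸ mem_of_mem_nhds (hB.mem k)
  obtain ⟨k, hk⟩ := (((h w hw_mem hw_tendsto).comp hφ.tendsto_atTop).eventually_mem hU).exists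
  exact hvU k (hw_φ k ▸ hk)

theorem StarConvex.eventually_nhdsWithin_forall_smul {E : Type*} [SeminormedAddCommGroup E]
    [NormedSpace ℝ E] {s : Set E} (hs : StarConvex ℝ 0 s) {p : E → Prop}
    (hp : ∀ᶠ z in 𝓝[s] 0, p z) :
    ∀ᶠ v in 𝓝[s] 0, ∀ t ∈ Icc (0 : ℝ) 1, p (t • v) := by
  obtain ⟨ε, hε, hball⟩ := Metric.mem_nhdsWithin_iff.1 hp
  have hstar : StarConvex ℝ 0 (ball 0 ε ∩ s) :=
    ((convex_ball 0 ε).starConvex (mem_ball_self hε)).inter hs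
  filter_upwards [Metric.mem_nhdsWithin_iff.2 ⟨ε, hε, subset_rfl⟩] with v hv t ht
  exact hball (hstar.smul_mem hv ht.1 ht.2)

theorem hasDerivAt_apply_smul_of_tendsto_slope {E : Type*} [AddCommGroup E] [Module ℝ E]
    {f : E → ℝ} {v : E} {t d : ℝ}
    (h : Tendsto (fun s : ℝ => (f (t • v + s • v) - f (t • v)) / s) (𝓝[≠] 0) (𝓝 d)) :
    HasDerivAt (fun s : ℝ => f (s • v)) d t := by
  rw [hasDerivAt_iff_tendsto_slope_zero]
  simpa only [add_smul, smul_eq_mul, inv_mul_eq_div] using h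

theorem norm_sub_sub_le_of_hasDerivAt_smul {E F : Type*} [NormedAddCommGroup E]
    [NormedSpace ℝ E] [NormedAddCommGroup F] [NormedSpace ℝ F] {f : E → F}
    {D : E → E →L[ℝ] F} {L : E →L[ℝ] F} {v : E} {c : ℝ}
    (hderiv : ∀ t ∈ Icc (0 : ℝ) 1, HasDerivAt (fun s : ℝ => f (s • v)) (D (t • v) v) t)
    (hbound : ∀ t ∈ Icc (0 : ℝ) 1, ‖D (t • v) - L‖ ≤ c) :
    ‖f v - f 0 - L v‖ ≤ c * ‖v‖ := by
  have hderiv' : ∀ t ∈ Icc (0 : ℝ) 1,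
      HasDerivWithinAt (fun s : ℝ => f (s • v) - s • L v) (D (t • v) v - L v) (Icc 0 1) t :=
    fun t ht => ((hderiv t ht).sub ((hasDerivAt_id t).smul_const (L v))).hasDerivWithinAt
      |>.congr_deriv (by simp)
  have hbound' : ∀ t ∈ Icc (0 : ℝ) 1, ‖D (t • v) v - L v‖ ≤ c * ‖v‖ := fun t ht =>
    calc ‖D (t • v) v - L v‖ = ‖(D (t • v) - L) v‖ := rfl
      _ ≤ ‖D (t • v) - L‖ * ‖v‖ := (D (t • v) - L).le_opNorm v
      _ ≤ c * ‖v‖ := by gcongr; exact hbound t ht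
  have := (convex_Icc (0 : ℝ) 1).norm_image_sub_le_of_norm_hasDerivWithin_le hderiv' hbound'
    (left_mem_Icc.2 zero_le_one) (right_mem_Icc.2 zero_le_one)
  simpa [sub_right_comm] using this

theorem statement12_general (V : Type*) [NormedAddCommGroup V] [NormedSpace ℝ V]
    (S : Set V) (h0 : (0 : V) ∈ closure S)
    (hstar : ∀ w ∈ closure S, segment ℝ 0 w ⊆ closure S)
    (τn : ℕ → V → ℝ) (τ : V → ℝ)
    (hpointwise : ∀ v ∈ closure S,
      Filter.Tendsto (fun n => τn n v) Filter.atTop (nhds (τ v)))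
    (U : Set V) (hUS : closure S ⊆ U)
    (D : ℕ → V → (V →L[ℝ] ℝ))
    (hGateaux : ∀ n, ∀ v ∈ U, ∀ h : V,
      Filter.Tendsto (fun t : ℝ => (τn n (v + t • h) - τn n v) / t)
        (nhdsWithin 0 {(0 : ℝ)}ᶜ) (nhds (D n v h)))
    (L : V →L[ℝ] ℝ)
    (hL : ∀ v : ℕ → V, (∀ n, v n ∈ closure S) →
      Filter.Tendsto v Filter.atTop (nhds 0) →
      Filter.Tendsto (fun n => D n (v n)) Filter.atTop (nhds L)) :
    HasFDerivWithinAt τ L (closure S) 0 := by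
  have hS : StarConvex ℝ 0 (closure S) := starConvex_iff_segment_subset.2 hstar
  have huniform := tendsto_uncurry_atTop_prod_nhdsWithin_of_seq h0 hL
  refine HasFDerivWithinAt.of_isLittleO (isLittleO_iff.2 fun c hc => ?_)
  obtain ⟨P, hP, Q, hQ, hPQ⟩ :=
    eventually_prod_iff.1 (huniform.eventually (closedBall_mem_nhds L hc))
  filter_upwards [hS.eventually_nhdsWithin_forall_smul hQ, self_mem_nhdsWithin] with v hvQ hv
  have hbound : ∀ᶠ n in atTop, ‖τn n v - τn n 0 - L v‖ ≤ c * ‖v‖ := by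
    filter_upwards [hP] with n hn
    refine norm_sub_sub_le_of_hasDerivAt_smul (D := D n) (fun t ht => ?_) fun t ht => ?_
    · exact hasDerivAt_apply_smul_of_tendsto_slope
        (hGateaux n _ (hUS (hS.smul_mem hv ht.1 ht.2)) v)
    · simpa [dist_eq_norm] using hPQ hn (hvQ t ht)
  have hlim := ((hpointwise v hv).sub (hpointwise 0 h0)).sub_const (L v)
  simpa using le_of_tendsto hlim.norm hbound

/-- differentiability of limits in Banach spaces: if continuous `τₙ → τ`
pointwise on the closure of an open set `S` (a star domain about `0`), each `τₙ` is
Gateaux differentiable on a neighborhood `U` of `closure S` with differentials `D n v`,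
and `D n (vₙ) → L` in operator norm whenever `vₙ ∈ closure S`, `vₙ → 0`, then `τ` is
Fréchet differentiable at `0` along `closure S` with derivative `L`. -/
theorem statement12 (V : Type*) [NormedAddCommGroup V] [NormedSpace ℝ V] [CompleteSpace V]
    (S : Set V) (hSopen : IsOpen S) (h0 : (0 : V) ∈ closure S)
    (hstar : ∀ w ∈ closure S, segment ℝ 0 w ⊆ closure S)
    (τn : ℕ → V → ℝ) (τ : V → ℝ)
    (hτncont : ∀ n, ContinuousOn (τn n) (closure S))
    (hτcont : ContinuousOn τ (closure S))
    (hpointwise : ∀ v ∈ closure S,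
      Filter.Tendsto (fun n => τn n v) Filter.atTop (nhds (τ v)))
    (U : Set V) (hUopen : IsOpen U) (hUS : closure S ⊆ U)
    (D : ℕ → V → (V →L[ℝ] ℝ))
    (hGateaux : ∀ n, ∀ v ∈ U, ∀ h : V,
      Filter.Tendsto (fun t : ℝ => (τn n (v + t • h) - τn n v) / t)
        (nhdsWithin 0 {(0 : ℝ)}ᶜ) (nhds (D n v h)))
    (L : V →L[ℝ] ℝ)
    (hL : ∀ v : ℕ → V, (∀ n, v n ∈ closure S) →
      Filter.Tendsto v Filter.atTop (nhds 0) →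
      Filter.Tendsto (fun n => D n (v n)) Filter.atTop (nhds L)) :
    HasFDerivWithinAt τ L (closure S) 0 :=
  statement12_general V S h0 hstar τn τ hpointwise U hUS D hGateaux L hL
end
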